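/- Consistency across reasoning for L-rationalizability: fix an anchor p, an order n ≥ 0, and a player i. Let K^n_{i,p} be the set of levels k with L^n_{i,p}(θ_{i,k}) ⊆ R^n_i. Then (1) the union over k ∈ K^n_{i,p} of L^n_{i,p}(θ_{i,k}) equals R^n_i, and (2) n ∈ K^n_{i,p}; in particular, the classic level-n behavior L^n_i[p] is contained in R^n_i. -/

import Mathlib

open Finset

/-- A probability distribution (as weights) on a finite set. -/
def IsDist {B : Type} [Fintype B] (ν : B → ℝ) : Prop :=
  (∀ b, 0 ≤ ν b) ∧ ∑ b, ν b = 1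

/-- `a` is a best reply to the conjecture `ν` (weights on the co-player's actions). -/
def isBR {A B : Type} [Fintype A] [Fintype B] (u : A → B → ℝ) (ν : B → ℝ) (a : A) : Prop :=
  ∀ a' : A, ∑ b, ν b * u a' b ≤ ∑ b, ν b * u a b

/-- `a` is strictly dominated by some mixed action. -/
def Dominated {A B : Type} [Fintype A] [Fintype B] (u : A → B → ℝ) (a : A) : Prop :=
  ∃ α : A → ℝ, IsDist α ∧ ∀ b : B, (∑ a', α a' * u a' b) > u a b

/-- One step of iterated elimination: best replies (within `S`) to conjectures on `T`. -/
def BRstep {A B : Type} [Fintype A] [Fintype B] (u : A → B → ℝ) (S : Set A) (T : Set B) :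
    Set A :=
  {a | a ∈ S ∧ ∃ ν : B → ℝ, IsDist ν ∧ (∀ b, ν b ≠ 0 → b ∈ T) ∧ isBR u ν a}

/-- `n`-rationalizability in the complete-information game. -/
def Rseq {A B : Type} [Fintype A] [Fintype B] (u1 : A → B → ℝ) (u2 : B → A → ℝ) :
    ℕ → Set A × Set B
  | 0 => (Set.univ, Set.univ)
  | n + 1 =>
    (BRstep u1 (Rseq u1 u2 n).1 (Rseq u1 u2 n).2,
     BRstep u2 (Rseq u1 u2 n).2 (Rseq u1 u2 n).1)

/-- Best replies to conjectures concentrated on `T`. -/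
def Lstep {A B : Type} [Fintype A] [Fintype B] (u : A → B → ℝ) (T : Set B) : Set A :=
  {a | ∃ ν : B → ℝ, IsDist ν ∧ (∀ b, ν b ≠ 0 → b ∈ T) ∧ isBR u ν a}

/-- The classic level-k solution under anchor `(p1, p2)`; `Lk … k` is level-`k` behavior
(meaningful for `k ≥ 1`). -/
def Lk {A B : Type} [Fintype A] [Fintype B] (u1 : A → B → ℝ) (u2 : B → A → ℝ)
    (p1 : A → ℝ) (p2 : B → ℝ) : ℕ → Set A × Set B
  | 0 => (Set.univ, Set.univ)
  | 1 => ({a | isBR u1 p2 a}, {b | isBR u2 p1 b})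
  | k + 2 =>
    (Lstep u1 (Lk u1 u2 p1 p2 (k + 1)).2,
     Lstep u2 (Lk u1 u2 p1 p2 (k + 1)).1)

/-- A Ĝ-conjecture over the co-player's (level-type, action) pairs: a finitely supported
type-marginal together with conditional action distributions. -/
structure GConj (B : Type) [Fintype B] where
  m : ℕ →₀ ℝ
  m_nonneg : ∀ t, 0 ≤ m t
  m_sum : (m.sum fun _ w => w) = 1
  cond : ℕ → B → ℝ
  cond_dist : ∀ t, IsDist (cond t)

/-- Marginal of a Ĝ-conjecture on the co-player's actions. -/
noncomputable def margAct {B : Type} [Fintype B] (μ : GConj B) : B → ℝ :=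
  fun b => μ.m.sum fun t w => w * μ.cond t b

/-- (K1): conditional on the co-player being of type 0 (if deemed possible),
play follows the anchor `q`. -/
def K1 {B : Type} [Fintype B] (q : B → ℝ) (μ : GConj B) : Prop :=
  μ.m 0 ≠ 0 → μ.cond 0 = q

/-- (K2): only co-player types strictly below `k` are deemed possible. -/
def K2 {B : Type} [Fintype B] (k : ℕ) (μ : GConj B) : Prop :=
  ∀ t, μ.m t ≠ 0 → t < k

/-- (KL): only the co-player type `k - 1` is deemed possible. -/
def KL {B : Type} [Fintype B] (k : ℕ) (μ : GConj B) : Prop :=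
  ∀ t, μ.m t ≠ 0 → t = k - 1

/-- Truncation `f^k` of the level distribution `f` at `k`. -/
noncomputable def ftrunc (f : ℕ → ℝ) (k t : ℕ) : ℝ :=
  f t / ∑ t' ∈ Finset.range k, f t'

/-- (KC): the type-marginal equals the truncation of `f` at `k`. -/
def KC {B : Type} [Fintype B] (f : ℕ → ℝ) (k : ℕ) (μ : GConj B) : Prop :=
  ∀ t < k, μ.m t = ftrunc f k t

/-- A full-support level distribution on ℕ. -/
def FullDist (f : ℕ → ℝ) : Prop :=
  (∀ t, 0 < f t) ∧ HasSum f 1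

/-- One step of Δ-rationalizability for one player, under belief restrictions `Δ`
(type-0 pairs always survive, since type-0 payoffs are constant). -/
def Dstep {A B : Type} [Fintype A] [Fintype B] (u : A → B → ℝ)
    (Δ : ℕ → GConj B → Prop) (S : Set (ℕ × A)) (T : Set (ℕ × B)) : Set (ℕ × A) :=
  {x | x ∈ S ∧ (x.1 = 0 ∨ ∃ μ : GConj B, Δ x.1 μ ∧
      (∀ t b, μ.m t ≠ 0 → μ.cond t b ≠ 0 → (t, b) ∈ T) ∧ isBR u (margAct μ) x.2)}

/-- Δ-rationalizability in the derived game with payoff uncertainty. -/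
def DeltaRat {A B : Type} [Fintype A] [Fintype B] (u1 : A → B → ℝ) (u2 : B → A → ℝ)
    (Δ1 : ℕ → GConj B → Prop) (Δ2 : ℕ → GConj A → Prop) :
    ℕ → Set (ℕ × A) × Set (ℕ × B)
  | 0 => (Set.univ, Set.univ)
  | n + 1 =>
    (Dstep u1 Δ1 (DeltaRat u1 u2 Δ1 Δ2 n).1 (DeltaRat u1 u2 Δ1 Δ2 n).2,
     Dstep u2 Δ2 (DeltaRat u1 u2 Δ1 Δ2 n).2 (DeltaRat u1 u2 Δ1 Δ2 n).1)

/-- Belief restrictions for downward rationalizability: (K1) and (K2). -/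
def DownR {B : Type} [Fintype B] (q : B → ℝ) : ℕ → GConj B → Prop :=
  fun k μ => K1 q μ ∧ K2 k μ

/-- Belief restrictions for L-rationalizability: (K1), (K2) and (KL). -/
def LR {B : Type} [Fintype B] (q : B → ℝ) : ℕ → GConj B → Prop :=
  fun k μ => K1 q μ ∧ K2 k μ ∧ KL k μ

/-- Belief restrictions for C-rationalizability: (K1), (K2) and (KC). -/
def CR {B : Type} [Fintype B] (q : B → ℝ) (f : ℕ → ℝ) : ℕ → GConj B → Prop :=
  fun k μ => K1 q μ ∧ K2 k μ ∧ KC f k μ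

section Sets

variable {A B : Type} [Fintype A] [Fintype B]

/-- `n`-downward-rationalizable actions of player 1's type `θ_{1,k}`. -/
def DSet (u1 : A → B → ℝ) (u2 : B → A → ℝ) (p1 : A → ℝ) (p2 : B → ℝ) (n k : ℕ) : Set A :=
  {a | (k, a) ∈ (DeltaRat u1 u2 (DownR p2) (DownR p1) n).1}

/-- `n`-downward-rationalizable actions of player 2's type `θ_{2,k}`. -/
def DSet2 (u1 : A → B → ℝ) (u2 : B → A → ℝ) (p1 : A → ℝ) (p2 : B → ℝ) (n k : ℕ) : Set B :=
  {b | (k, b) ∈ (DeltaRat u1 u2 (DownR p2) (DownR p1) n).2}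

def DSetInf (u1 : A → B → ℝ) (u2 : B → A → ℝ) (p1 : A → ℝ) (p2 : B → ℝ) (k : ℕ) : Set A :=
  ⋂ n, DSet u1 u2 p1 p2 n k

def DSet2Inf (u1 : A → B → ℝ) (u2 : B → A → ℝ) (p1 : A → ℝ) (p2 : B → ℝ) (k : ℕ) : Set B :=
  ⋂ n, DSet2 u1 u2 p1 p2 n k

/-- `n`-L-rationalizable actions of player 1's type `θ_{1,k}`. -/
def LSet (u1 : A → B → ℝ) (u2 : B → A → ℝ) (p1 : A → ℝ) (p2 : B → ℝ) (n k : ℕ) : Set A :=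
  {a | (k, a) ∈ (DeltaRat u1 u2 (LR p2) (LR p1) n).1}

/-- `n`-L-rationalizable actions of player 2's type `θ_{2,k}`. -/
def LSet2 (u1 : A → B → ℝ) (u2 : B → A → ℝ) (p1 : A → ℝ) (p2 : B → ℝ) (n k : ℕ) : Set B :=
  {b | (k, b) ∈ (DeltaRat u1 u2 (LR p2) (LR p1) n).2}

def LSetInf (u1 : A → B → ℝ) (u2 : B → A → ℝ) (p1 : A → ℝ) (p2 : B → ℝ) (k : ℕ) : Set A :=
  ⋂ n, LSet u1 u2 p1 p2 n k

def LSet2Inf (u1 : A → B → ℝ) (u2 : B → A → ℝ) (p1 : A → ℝ) (p2 : B → ℝ) (k : ℕ) : Set B :=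
  ⋂ n, LSet2 u1 u2 p1 p2 n k

/-- `n`-C-rationalizable actions of player 1's type `θ_{1,k}`. -/
def CSet (u1 : A → B → ℝ) (u2 : B → A → ℝ) (p1 : A → ℝ) (p2 : B → ℝ) (f : ℕ → ℝ)
    (n k : ℕ) : Set A :=
  {a | (k, a) ∈ (DeltaRat u1 u2 (CR p2 f) (CR p1 f) n).1}

/-- `n`-C-rationalizable actions of player 2's type `θ_{2,k}`. -/
def CSet2 (u1 : A → B → ℝ) (u2 : B → A → ℝ) (p1 : A → ℝ) (p2 : B → ℝ) (f : ℕ → ℝ)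
    (n k : ℕ) : Set B :=
  {b | (k, b) ∈ (DeltaRat u1 u2 (CR p2 f) (CR p1 f) n).2}

/-- The Cognitive Hierarchy solution: `CHsol … k` is CH level-`k` behavior (`k ≥ 1`). -/
def CHsol (u1 : A → B → ℝ) (u2 : B → A → ℝ) (p1 : A → ℝ) (p2 : B → ℝ) (f : ℕ → ℝ) :
    ℕ → Set A × Set B
  | 0 => (Set.univ, Set.univ)
  | 1 => ({a | isBR u1 p2 a}, {b | isBR u2 p1 b})
  | k + 2 =>
    ({a | ∃ μ : GConj B, K2 (k + 2) μ ∧ KC f (k + 2) μ ∧ K1 p2 μ ∧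
        (∀ t, 0 < t → ∀ _ : t < k + 2, ∀ b, μ.m t ≠ 0 → μ.cond t b ≠ 0 →
          b ∈ (CHsol u1 u2 p1 p2 f t).2) ∧
        isBR u1 (margAct μ) a},
     {b | ∃ μ : GConj A, K2 (k + 2) μ ∧ KC f (k + 2) μ ∧ K1 p1 μ ∧
        (∀ t, 0 < t → ∀ _ : t < k + 2, ∀ a, μ.m t ≠ 0 → μ.cond t a ≠ 0 →
          a ∈ (CHsol u1 u2 p1 p2 f t).1) ∧
        isBR u2 (margAct μ) b})
  termination_by k => k

end Sets

section Helpers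

variable {A B : Type} [Fintype A] [Fintype B]

lemma margAct_apply (μ : GConj B) (b : B) :
    margAct μ b = ∑ t ∈ μ.m.support, μ.m t * μ.cond t b := rfl

lemma margAct_isDist (μ : GConj B) : IsDist (margAct μ) := by
  constructor
  · intro b
    rw [margAct_apply]
    exact Finset.sum_nonneg fun t _ => mul_nonneg (μ.m_nonneg t) ((μ.cond_dist t).1 b)
  · have h := μ.m_sum
    rw [Finsupp.sum] at h
    calc ∑ b, margAct μ b = ∑ b, ∑ t ∈ μ.m.support, μ.m t * μ.cond t b := rfl
    _ = ∑ t ∈ μ.m.support, ∑ b, μ.m t * μ.cond t b := Finset.sum_comm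
    _ = ∑ t ∈ μ.m.support, μ.m t * ∑ b, μ.cond t b := by simp [Finset.mul_sum]
    _ = ∑ t ∈ μ.m.support, μ.m t := by
        refine Finset.sum_congr rfl fun t _ => ?_
        rw [(μ.cond_dist t).2, mul_one]
    _ = 1 := h

lemma margAct_support (μ : GConj B) (b : B) (h : margAct μ b ≠ 0) :
    ∃ t, μ.m t ≠ 0 ∧ μ.cond t b ≠ 0 := by
  by_contra hc
  push_neg at hc
  apply h
  rw [margAct_apply]
  refine Finset.sum_eq_zero fun t ht => ?_
  rcases eq_or_ne (μ.m t) 0 with h0 | h0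
  · rw [h0, zero_mul]
  · rw [hc t h0, mul_zero]

lemma KL_support_eq {k : ℕ} {μ : GConj B} (h : KL k μ) : μ.m.support = {k - 1} := by
  have hsub : μ.m.support ⊆ {k - 1} := fun t ht => by
    simp [h t (Finsupp.mem_support_iff.mp ht)]
  rcases Finset.subset_singleton_iff.mp hsub with he | he
  · exfalso
    have hs := μ.m_sum
    rw [Finsupp.sum, he] at hs
    simp at hs
  · exact he

lemma KL_m_eq_one {k : ℕ} {μ : GConj B} (h : KL k μ) : μ.m (k - 1) = 1 := by
  have hs := μ.m_sum
  rw [Finsupp.sum, KL_support_eq h, Finset.sum_singleton] at hs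
  exact hs

lemma KL_margAct {k : ℕ} {μ : GConj B} (h : KL k μ) : margAct μ = μ.cond (k - 1) := by
  funext b
  rw [margAct_apply, KL_support_eq h, Finset.sum_singleton, KL_m_eq_one h, one_mul]

/-- Conjecture with type-marginal concentrated on `t0` and constant conditional `ν`. -/
noncomputable def singleConj (t0 : ℕ) (ν : B → ℝ) (hν : IsDist ν) : GConj B where
  m := Finsupp.single t0 1
  m_nonneg := fun t => by
    rcases eq_or_ne t t0 with h | h <;> simp [Finsupp.single_apply, h] <;> positivity
  m_sum := Finsupp.sum_single_index rfl
  cond := fun _ => ν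
  cond_dist := fun _ => hν

lemma singleConj_m {t0 : ℕ} {ν : B → ℝ} {hν : IsDist ν} {t : ℕ}
    (h : (singleConj t0 ν hν).m t ≠ 0) : t = t0 := by
  by_contra hne
  exact h (Finsupp.single_eq_of_ne' (Ne.symm hne))

lemma singleConj_cond (t0 : ℕ) (ν : B → ℝ) (hν : IsDist ν) (t : ℕ) :
    (singleConj t0 ν hν).cond t = ν := rfl

lemma singleConj_margAct (t0 : ℕ) (ν : B → ℝ) (hν : IsDist ν) :
    margAct (singleConj t0 ν hν) = ν := by
  funext b
  show ((Finsupp.single t0 (1:ℝ)).sum fun _ w => w * ν b) = ν b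
  rw [Finsupp.sum_single_index (by rw [zero_mul]), one_mul]

end Helpers
section Helpers2

variable {A B : Type} [Fintype A] [Fintype B]

lemma BRstep_subset (u : A → B → ℝ) (S : Set A) (T : Set B) : BRstep u S T ⊆ S :=
  fun _ h => h.1

lemma Rseq_succ_eq (u1 : A → B → ℝ) (u2 : B → A → ℝ) (n : ℕ) :
    Rseq u1 u2 (n + 1) =
      (BRstep u1 (Rseq u1 u2 n).1 (Rseq u1 u2 n).2,
       BRstep u2 (Rseq u1 u2 n).2 (Rseq u1 u2 n).1) := rfl

lemma Rseq_antitone₁ (u1 : A → B → ℝ) (u2 : B → A → ℝ) {n m : ℕ} (h : n ≤ m) :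
    (Rseq u1 u2 m).1 ⊆ (Rseq u1 u2 n).1 := by
  induction m, h using Nat.le_induction with
  | base => exact subset_rfl
  | succ m _ ih => exact fun a ha => ih ha.1

lemma Rseq_antitone₂ (u1 : A → B → ℝ) (u2 : B → A → ℝ) {n m : ℕ} (h : n ≤ m) :
    (Rseq u1 u2 m).2 ⊆ (Rseq u1 u2 n).2 := by
  induction m, h using Nat.le_induction with
  | base => exact subset_rfl
  | succ m _ ih => exact fun a ha => ih ha.1

lemma Rseq_swap (u1 : A → B → ℝ) (u2 : B → A → ℝ) :
    ∀ n, (Rseq u1 u2 n).1 = (Rseq u2 u1 n).2 ∧ (Rseq u1 u2 n).2 = (Rseq u2 u1 n).1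
  | 0 => ⟨rfl, rfl⟩
  | n + 1 => by
    obtain ⟨h1, h2⟩ := Rseq_swap u1 u2 n
    constructor <;> · show BRstep _ _ _ = BRstep _ _ _; rw [h1, h2]

lemma DeltaRat_succ_eq (u1 : A → B → ℝ) (u2 : B → A → ℝ)
    (Δ1 : ℕ → GConj B → Prop) (Δ2 : ℕ → GConj A → Prop) (n : ℕ) :
    DeltaRat u1 u2 Δ1 Δ2 (n + 1) =
      (Dstep u1 Δ1 (DeltaRat u1 u2 Δ1 Δ2 n).1 (DeltaRat u1 u2 Δ1 Δ2 n).2,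
       Dstep u2 Δ2 (DeltaRat u1 u2 Δ1 Δ2 n).2 (DeltaRat u1 u2 Δ1 Δ2 n).1) := rfl

lemma DeltaRat_swap (u1 : A → B → ℝ) (u2 : B → A → ℝ)
    (Δ1 : ℕ → GConj B → Prop) (Δ2 : ℕ → GConj A → Prop) :
    ∀ n, (DeltaRat u1 u2 Δ1 Δ2 n).1 = (DeltaRat u2 u1 Δ2 Δ1 n).2 ∧
      (DeltaRat u1 u2 Δ1 Δ2 n).2 = (DeltaRat u2 u1 Δ2 Δ1 n).1
  | 0 => ⟨rfl, rfl⟩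
  | n + 1 => by
    obtain ⟨h1, h2⟩ := DeltaRat_swap u1 u2 Δ1 Δ2 n
    constructor <;> · show Dstep _ _ _ _ = Dstep _ _ _ _; rw [h1, h2]

lemma LSet2_swap (u1 : A → B → ℝ) (u2 : B → A → ℝ) (p1 : A → ℝ) (p2 : B → ℝ) (n k : ℕ) :
    LSet2 u1 u2 p1 p2 n k = LSet u2 u1 p2 p1 n k := by
  unfold LSet2 LSet
  rw [(DeltaRat_swap u1 u2 (LR p2) (LR p1) n).2]

lemma type0_mem₁ (u1 : A → B → ℝ) (u2 : B → A → ℝ)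
    (Δ1 : ℕ → GConj B → Prop) (Δ2 : ℕ → GConj A → Prop) :
    ∀ n (a : A), (0, a) ∈ (DeltaRat u1 u2 Δ1 Δ2 n).1
  | 0, _ => Set.mem_univ _
  | n + 1, a => ⟨type0_mem₁ u1 u2 Δ1 Δ2 n a, Or.inl rfl⟩

lemma type0_mem₂ (u1 : A → B → ℝ) (u2 : B → A → ℝ)
    (Δ1 : ℕ → GConj B → Prop) (Δ2 : ℕ → GConj A → Prop) (n : ℕ) (b : B) :
    (0, b) ∈ (DeltaRat u1 u2 Δ1 Δ2 n).2 := by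
  rw [(DeltaRat_swap u1 u2 Δ1 Δ2 n).2]
  exact type0_mem₁ u2 u1 Δ2 Δ1 n b

/-- Best replies to conjectures on a subset of `m`-rationalizable actions are
`(m+1)`-rationalizable. -/
lemma Lstep_sub_Rseq (u1 : A → B → ℝ) (u2 : B → A → ℝ) :
    ∀ m (T : Set B), T ⊆ (Rseq u1 u2 m).2 → Lstep u1 T ⊆ (Rseq u1 u2 (m + 1)).1
  | 0, T, _ => fun a ⟨ν, hν, _, hBR⟩ =>
      ⟨Set.mem_univ a, ν, hν, fun _ _ => Set.mem_univ _, hBR⟩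
  | m + 1, T, hT => fun a ha => by
      obtain ⟨ν, hν, hsupp, hBR⟩ := ha
      refine ⟨Lstep_sub_Rseq u1 u2 m T
        (hT.trans (Rseq_antitone₂ u1 u2 (Nat.le_succ m))) ⟨ν, hν, hsupp, hBR⟩,
        ν, hν, fun b hb => hT (hsupp b hb), hBR⟩

lemma Lk_swap : ∀ (k : ℕ) {A B : Type} [Fintype A] [Fintype B]
    (u1 : A → B → ℝ) (u2 : B → A → ℝ) (p1 : A → ℝ) (p2 : B → ℝ),
    (Lk u1 u2 p1 p2 k).2 = (Lk u2 u1 p2 p1 k).1 := by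
  intro k
  induction k using Nat.strong_induction_on with
  | _ k ih =>
    obtain _ | _ | j := k <;> intro A B _ _ u1 u2 p1 p2
    · rfl
    · rfl
    · show Lstep u2 (Lk u1 u2 p1 p2 (j + 1)).1 = Lstep u2 (Lk u2 u1 p2 p1 (j + 1)).2
      rw [← ih (j + 1) (by omega) u2 u1 p2 p1]

/-- Classic level-`k` behavior is `k`-rationalizable. -/
lemma Lk_sub_Rseq₁ : ∀ (k : ℕ) {A B : Type} [Fintype A] [Fintype B]
    (u1 : A → B → ℝ) (u2 : B → A → ℝ) (p1 : A → ℝ) (p2 : B → ℝ),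
    IsDist p1 → IsDist p2 → (Lk u1 u2 p1 p2 k).1 ⊆ (Rseq u1 u2 k).1 := by
  intro k
  induction k using Nat.strong_induction_on with
  | _ k ih =>
    obtain _ | _ | j := k <;> intro A B _ _ u1 u2 p1 p2 hp1 hp2
    · exact subset_rfl
    · intro a ha
      exact Lstep_sub_Rseq u1 u2 0 Set.univ subset_rfl
        ⟨p2, hp2, fun _ _ => Set.mem_univ _, ha⟩
    · have h2 : (Lk u1 u2 p1 p2 (j + 1)).2 ⊆ (Rseq u1 u2 (j + 1)).2 := by
        rw [Lk_swap (j + 1) u1 u2 p1 p2, (Rseq_swap u1 u2 (j + 1)).2]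
        exact ih (j + 1) (by omega) u2 u1 p2 p1 hp2 hp1
      exact Lstep_sub_Rseq u1 u2 (j + 1) _ h2

end Helpers2
section Helpers3

variable {A B : Type} [Fintype A] [Fintype B]

lemma mem_LSet_succ (u1 : A → B → ℝ) (u2 : B → A → ℝ) (p1 : A → ℝ) (p2 : B → ℝ)
    (n k : ℕ) (a : A) :
    a ∈ LSet u1 u2 p1 p2 (n + 1) k ↔ a ∈ LSet u1 u2 p1 p2 n k ∧
      (k = 0 ∨ ∃ μ : GConj B, LR p2 k μ ∧
        (∀ t b, μ.m t ≠ 0 → μ.cond t b ≠ 0 → b ∈ LSet2 u1 u2 p1 p2 n t) ∧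
        isBR u1 (margAct μ) a) := Iff.rfl

/-- Characterization, high levels: for `k > n`, the `n`-L-rationalizable actions of
type `θ_{1,k}` are exactly the `n`-rationalizable actions. -/
lemma LSet_eq_Rseq_of_lt : ∀ (n : ℕ) {A B : Type} [Fintype A] [Fintype B]
    (u1 : A → B → ℝ) (u2 : B → A → ℝ) (p1 : A → ℝ) (p2 : B → ℝ) (k : ℕ), n < k →
    LSet u1 u2 p1 p2 n k = (Rseq u1 u2 n).1 := by
  intro n
  induction n with
  | zero =>
    intro A B _ _ u1 u2 p1 p2 k hk
    rfl
  | succ n ih =>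
    intro A B _ _ u1 u2 p1 p2 k hk
    have ih2 : LSet2 u1 u2 p1 p2 n (k - 1) = (Rseq u1 u2 n).2 := by
      rw [LSet2_swap, (Rseq_swap u1 u2 n).2]
      exact ih u2 u1 p2 p1 (k - 1) (by omega)
    ext a
    rw [mem_LSet_succ]
    constructor
    · rintro ⟨hprev, h0 | ⟨μ, ⟨hK1, hK2, hKL⟩, hsupp, hBR⟩⟩
      · omega
      · refine ⟨?_, margAct μ, margAct_isDist μ, ?_, hBR⟩
        · rw [ih u1 u2 p1 p2 k (by omega)] at hprev
          exact hprev
        · intro b hb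
          obtain ⟨t, hmt, hct⟩ := margAct_support μ b hb
          have ht := hKL t hmt
          have hmem := hsupp t b hmt hct
          rw [ht] at hmem
          rw [← ih2]
          exact hmem
    · rintro ⟨hR, ν, hν, hsupp, hBR⟩
      refine ⟨by rw [ih u1 u2 p1 p2 k (by omega)]; exact hR,
        Or.inr ⟨singleConj (k - 1) ν hν, ⟨?_, ?_, ?_⟩, ?_, ?_⟩⟩
      · intro h
        exact absurd (singleConj_m h) (by omega)
      · intro t ht
        have := singleConj_m ht
        omega
      · intro t ht
        exact singleConj_m ht
      · intro t b ht hc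
        have h1 := singleConj_m ht
        subst h1
        rw [ih2]
        exact hsupp b hc
      · rw [singleConj_margAct]
        exact hBR

/-- Characterization, low levels: for `k ≤ n`, the `n`-L-rationalizable actions of
type `θ_{1,k}` are exactly the classic level-`k` actions. -/
lemma LSet_eq_Lk_of_le : ∀ (n : ℕ) {A B : Type} [Fintype A] [Fintype B]
    (u1 : A → B → ℝ) (u2 : B → A → ℝ) (p1 : A → ℝ) (p2 : B → ℝ),
    IsDist p1 → IsDist p2 → ∀ k ≤ n,
    LSet u1 u2 p1 p2 n k = (Lk u1 u2 p1 p2 k).1 := by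
  intro n
  induction n with
  | zero =>
    intro A B _ _ u1 u2 p1 p2 _ _ k hk
    interval_cases k
    rfl
  | succ n ih =>
    intro A B _ _ u1 u2 p1 p2 hp1 hp2 k hk
    obtain _ | _ | j := k
    · -- k = 0
      ext a
      simp only [Lk]
      exact ⟨fun _ => Set.mem_univ a, fun _ => type0_mem₁ u1 u2 (LR p2) (LR p1) (n + 1) a⟩
    · -- k = 1
      ext a
      rw [mem_LSet_succ]
      show _ ↔ isBR u1 p2 a
      constructor
      · rintro ⟨_, h0 | ⟨μ, ⟨hK1, _, hKL⟩, _, hBR⟩⟩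
        · exact absurd h0 one_ne_zero
        · have hm := KL_m_eq_one hKL
          have hc := hK1 (by rw [hm]; norm_num)
          rwa [KL_margAct hKL, hc] at hBR
      · intro hBR
        refine ⟨?_, Or.inr ⟨singleConj 0 p2 hp2, ⟨fun _ => rfl, ?_, ?_⟩, ?_, ?_⟩⟩
        · obtain _ | m := n
          · exact Set.mem_univ a
          · rw [ih u1 u2 p1 p2 hp1 hp2 1 (by omega)]
            exact hBR
        · intro t ht
          have := singleConj_m ht
          omega
        · intro t ht
          exact singleConj_m ht
        · intro t b ht _
          have h1 := singleConj_m ht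
          subst h1
          exact type0_mem₂ u1 u2 (LR p2) (LR p1) n b
        · rw [singleConj_margAct]
          exact hBR
    · -- k = j + 2
      have hLk2 : LSet2 u1 u2 p1 p2 n (j + 1) = (Lk u1 u2 p1 p2 (j + 1)).2 := by
        rw [LSet2_swap, Lk_swap]
        exact ih u2 u1 p2 p1 hp2 hp1 (j + 1) (by omega)
      have hLkprev : (Lk u1 u2 p1 p2 (j + 2)).1 ⊆ LSet u1 u2 p1 p2 n (j + 2) := by
        rcases Nat.lt_or_ge n (j + 2) with h | h
        · rw [LSet_eq_Rseq_of_lt n u1 u2 p1 p2 (j + 2) h]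
          have hn : n = j + 1 := by omega
          subst hn
          exact (Lk_sub_Rseq₁ (j + 2) u1 u2 p1 p2 hp1 hp2).trans
            (Rseq_antitone₁ u1 u2 (Nat.le_succ _))
        · rw [ih u1 u2 p1 p2 hp1 hp2 (j + 2) h]
      ext a
      rw [mem_LSet_succ]
      constructor
      · rintro ⟨_, h0 | ⟨μ, ⟨_, _, hKL⟩, hsupp, hBR⟩⟩
        · exact absurd h0 (by omega)
        · show a ∈ Lstep u1 (Lk u1 u2 p1 p2 (j + 1)).2
          have hm1 : μ.m (j + 1) = 1 := KL_m_eq_one hKL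
          refine ⟨μ.cond (j + 1), μ.cond_dist (j + 1), ?_,
            by rwa [KL_margAct hKL] at hBR⟩
          intro b hb
          have hmem : b ∈ LSet2 u1 u2 p1 p2 n (j + 1) :=
            hsupp (j + 1) b (by rw [hm1]; norm_num) hb
          rwa [hLk2] at hmem
      · intro ha
        obtain ⟨ν, hν, hsupp, hBR⟩ := ha
        refine ⟨hLkprev ⟨ν, hν, hsupp, hBR⟩,
          Or.inr ⟨singleConj (j + 1) ν hν, ⟨?_, ?_, ?_⟩, ?_, ?_⟩⟩
        · intro h
          exact absurd (singleConj_m h) (by omega)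
        · intro t ht
          have := singleConj_m ht
          omega
        · intro t ht
          exact singleConj_m ht
        · intro t b ht hc
          have h1 := singleConj_m ht
          subst h1
          rw [hLk2]
          exact hsupp b hc
        · rw [singleConj_margAct]
          exact hBR

end Helpers3
/-- consistency across reasoning for L-rationalizability: the union of
`n`-L-rationalizable actions over the consistent levels equals `R^n_i`; the level `n`
itself is consistent; in particular classic level-`n` behavior is `n`-rationalizable. -/
theorem L_consistency_across_reasoning {A B : Type} [Fintype A] [Fintype B]
    (u1 : A → B → ℝ) (u2 : B → A → ℝ) (p1 : A → ℝ) (p2 : B → ℝ)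
    (hp1 : IsDist p1) (hp2 : IsDist p2) (n : ℕ) :
    ((⋃ k ∈ {k : ℕ | LSet u1 u2 p1 p2 n k ⊆ (Rseq u1 u2 n).1},
        LSet u1 u2 p1 p2 n k) = (Rseq u1 u2 n).1 ∧
      LSet u1 u2 p1 p2 n n ⊆ (Rseq u1 u2 n).1 ∧
      (Lk u1 u2 p1 p2 n).1 ⊆ (Rseq u1 u2 n).1) ∧
    ((⋃ k ∈ {k : ℕ | LSet2 u1 u2 p1 p2 n k ⊆ (Rseq u1 u2 n).2},
        LSet2 u1 u2 p1 p2 n k) = (Rseq u1 u2 n).2 ∧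
      LSet2 u1 u2 p1 p2 n n ⊆ (Rseq u1 u2 n).2 ∧
      (Lk u1 u2 p1 p2 n).2 ⊆ (Rseq u1 u2 n).2) := by
  have main : ∀ {A B : Type} [Fintype A] [Fintype B] (u1 : A → B → ℝ) (u2 : B → A → ℝ)
      (p1 : A → ℝ) (p2 : B → ℝ), IsDist p1 → IsDist p2 →
      (⋃ k ∈ {k : ℕ | LSet u1 u2 p1 p2 n k ⊆ (Rseq u1 u2 n).1},
        LSet u1 u2 p1 p2 n k) = (Rseq u1 u2 n).1 ∧
      LSet u1 u2 p1 p2 n n ⊆ (Rseq u1 u2 n).1 ∧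
      (Lk u1 u2 p1 p2 n).1 ⊆ (Rseq u1 u2 n).1 := by
    intro A B _ _ u1 u2 p1 p2 hp1 hp2
    have hA : LSet u1 u2 p1 p2 n (n + 1) = (Rseq u1 u2 n).1 :=
      LSet_eq_Rseq_of_lt n u1 u2 p1 p2 (n + 1) (by omega)
    have hn : LSet u1 u2 p1 p2 n n ⊆ (Rseq u1 u2 n).1 := by
      rw [LSet_eq_Lk_of_le n u1 u2 p1 p2 hp1 hp2 n le_rfl]
      exact Lk_sub_Rseq₁ n u1 u2 p1 p2 hp1 hp2
    refine ⟨?_, hn, Lk_sub_Rseq₁ n u1 u2 p1 p2 hp1 hp2⟩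
    apply Set.Subset.antisymm
    · exact Set.iUnion₂_subset fun k hk => hk
    · intro a ha
      exact Set.mem_biUnion (show LSet u1 u2 p1 p2 n (n + 1) ⊆ (Rseq u1 u2 n).1
        from hA.subset) (by rw [hA]; exact ha)
  refine ⟨main u1 u2 p1 p2 hp1 hp2, ?_⟩
  simp only [LSet2_swap, (Rseq_swap u1 u2 n).2, Lk_swap n u1 u2 p1 p2]
  exact main u2 u1 p2 p1 hp2 hp1
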